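/- arXiv:2009.05550 — 3 statements merged into one kernel-verified Lean document; each statement's English description precedes it below -/
import Mathlib

section
/- Let n ≥ 3, let γ, α be real numbers, and let i be an index with 1 ≤ i ≤ n − 2 (0-based indexing). Let D = D(γ, i) be the n×n real matrix equal to the identity matrix except in row i, where its entries are 1 − γ in column i − 1, −1 in column i, and 1 + γ in column i + 1, and let F be the n×n matrix whose only nonzero entry is −α in position (i, i). Let M be the 2n×2n block matrix [[D, F], [0, Dᵀ]] and J the standard symplectic matrix [[0, I], [−I, 0]]. Then Mᵀ·J·M = J; that is, the derivative of a ball-to-ball collision map is a symplectic matrix. -/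
/-!
For `M = [[A, B], [0, C]]` a block computation gives `Mᵀ J M = [[0, Aᵀ C], [-(Cᵀ A), Bᵀ C - Cᵀ B]]`,
so with `A = D`, `B = F`, `C = Dᵀ` it suffices that `D` is an involution and `D F` is symmetric.
`D` is the identity with row `i` replaced by a row whose diagonal entry is `-1`; such a matrix
squares to the identity, and multiplying it onto `F = -α Eᵢᵢ` only flips the sign of `F`.
-/

open Matrix

namespace Matrix

variable {m R : Type*} [Fintype m] [DecidableEq m] [CommRing R]

theorem fromBlocks_zero_transpose_mul_J_mul {A B C : Matrix m m R}
    (hAC : Aᵀ * C = 1) (hBC : Bᵀ * C = Cᵀ * B) :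
    (fromBlocks A B 0 C)ᵀ * fromBlocks 0 1 (-1) 0 * fromBlocks A B 0 C =
      fromBlocks 0 1 (-1) 0 := by
  have hCA : Cᵀ * A = 1 := by
    rw [← transpose_transpose A, ← transpose_mul, hAC, transpose_one]
  simp [fromBlocks_transpose, fromBlocks_multiply, hAC, hCA, hBC]

theorem vecMul_updateRow_one_self {i : m} {w : m → R} (hw : w i = -1) :
    w ᵥ* updateRow 1 i w = Pi.single i 1 := by
  ext k
  have hrest : ∑ l ∈ {i}ᶜ, w l * updateRow 1 i w l k = if k = i then 0 else w k := by
    rw [Finset.sum_congr rfl fun l hl => by rw [updateRow_ne (by simpa using hl : l ≠ i)]]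
    simp [one_apply]
  rw [vecMul, dotProduct, Fintype.sum_eq_add_sum_compl i, hrest]
  by_cases hk : k = i
  · subst hk
    simp [hw]
  · simp [hk, hw]

theorem updateRow_one_mul_self {i : m} {w : m → R} (hw : w i = -1) :
    updateRow 1 i w * updateRow 1 i w = 1 := by
  rw [updateRow_mul, Matrix.one_mul, vecMul_updateRow_one_self hw, updateRow_idem]
  conv_rhs => rw [← updateRow_eq_self (1 : Matrix m m R) i]
  congr 1
  ext k
  exact one_eq_pi_single.symm

theorem updateRow_one_mul_single {i : m} {w : m → R} (hw : w i = -1) (c : R) :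
    updateRow 1 i w * single i i c = single i i (-c) := by
  ext j k
  rw [mul_apply, Finset.sum_eq_single i (fun l _ hl => by simp [Ne.symm hl]) (by simp)]
  by_cases hj : j = i
  · subst hj
    by_cases hk : j = k
    · subst hk
      simp [hw]
    · simp [hk]
  · simp [single_apply, hj, Ne.symm hj]

end Matrix

theorem ball_collision_derivative_symplectic_general (n : ℕ) (γ α : ℝ)
    (i : ℕ) (hi1 : 1 ≤ i) (hi2 : i ≤ n - 2)
    (D F : Matrix (Fin n) (Fin n) ℝ)
    (hD : D = Matrix.of fun (j k : Fin n) =>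
      if (j : ℕ) = i then
        (if (k : ℕ) = i - 1 then 1 - γ
         else if (k : ℕ) = i then -1
         else if (k : ℕ) = i + 1 then 1 + γ
         else 0)
      else if j = k then 1 else 0)
    (hF : F = Matrix.of fun (j k : Fin n) =>
      if (j : ℕ) = i ∧ (k : ℕ) = i then -α else 0)
    (M J : Matrix (Fin n ⊕ Fin n) (Fin n ⊕ Fin n) ℝ)
    (hM : M = Matrix.fromBlocks D F 0 Dᵀ)
    (hJ : J = Matrix.fromBlocks 0 1 (-1) 0) :
    Mᵀ * J * M = J := by
  set I : Fin n := ⟨i, by omega⟩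
  set w : Fin n → ℝ := fun k =>
    if (k : ℕ) = i - 1 then 1 - γ else if (k : ℕ) = i then -1
    else if (k : ℕ) = i + 1 then 1 + γ else 0
  have hw : w I = -1 := by
    simp only [w, I, if_neg (show i ≠ i - 1 by omega), if_true]
  have hD_row : D = updateRow 1 I w := by
    ext j k
    simp [hD, updateRow_apply, one_apply, Fin.ext_iff, w, I]
  have hF_single : F = single I I (-α) := by
    ext j k
    simp [hF, single_apply, Fin.ext_iff, I, eq_comm]
  rw [hM, hJ]
  apply fromBlocks_zero_transpose_mul_J_mul
  · rw [← transpose_mul, hD_row, updateRow_one_mul_self hw, transpose_one]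
  · rw [← transpose_mul, transpose_transpose, hD_row, hF_single, updateRow_one_mul_single hw,
      transpose_single]

/-- The derivative of a ball-to-ball collision map is a symplectic matrix. -/
theorem ball_collision_derivative_symplectic (n : ℕ) (hn : 3 ≤ n) (γ α : ℝ)
    (i : ℕ) (hi1 : 1 ≤ i) (hi2 : i ≤ n - 2)
    (D F : Matrix (Fin n) (Fin n) ℝ)
    (hD : D = Matrix.of fun (j k : Fin n) =>
      if (j : ℕ) = i then
        (if (k : ℕ) = i - 1 then 1 - γ
         else if (k : ℕ) = i then -1
         else if (k : ℕ) = i + 1 then 1 + γ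
         else 0)
      else if j = k then 1 else 0)
    (hF : F = Matrix.of fun (j k : Fin n) =>
      if (j : ℕ) = i ∧ (k : ℕ) = i then -α else 0)
    (M J : Matrix (Fin n ⊕ Fin n) (Fin n ⊕ Fin n) ℝ)
    (hM : M = Matrix.fromBlocks D F 0 Dᵀ)
    (hJ : J = Matrix.fromBlocks 0 1 (-1) 0) :
    Mᵀ * J * M = J :=
  ball_collision_derivative_symplectic_general n γ α i hi1 hi2 D F hD hF M J hM hJ
end

section
/- Let n ≥ 3, let γ, α be real numbers, and let i be an index with 1 ≤ i ≤ n − 2 (0-based indexing). Let D = D(γ, i) be the n×n real matrix equal to the identity matrix except in row i, where its entries are 1 − γ in column i − 1, −1 in column i, and 1 + γ in column i + 1, and let F be the n×n matrix whose only nonzero entry is −α in position (i, i). Then for all vectors ξ, η ∈ ℝⁿ, the quadratic form Q(ξ, η) = ⟨ξ, η⟩ satisfies Q(D·ξ + F·η, Dᵀ·η) = Q(ξ, η) + α·η_i². In particular, if α ≥ 0 then the derivative of the ball-to-ball collision map is Q-monotone, and it is strictly Q-increasing on every vector with η_i ≠ 0 when α > 0. -/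
/-!
`D` agrees with the identity off row `i` and has `D i i = -1`, so `D v` only replaces `v i` by
`r ⬝ᵥ v` (with `r` the `i`-th row), and doing this twice restores `v i`: `D` is an involution.
Hence `⟨D ξ, Dᵀ η⟩ = ⟨D² ξ, η⟩ = ⟨ξ, η⟩`. Moreover `(Dᵀ η) i = D i i * η i = -η i`, so the
`F`-term adds `⟨-α η_i e_i, Dᵀ η⟩ = α η_i²`.
-/

open Matrix

namespace Matrix

variable {ι R : Type*} [Fintype ι] [CommRing R]

theorem dotProduct_transpose_mulVec_of_involutive {A : Matrix ι ι R}
    (hA : Function.Involutive (A *ᵥ ·)) (ξ η : ι → R) :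
    (A *ᵥ ξ) ⬝ᵥ (Aᵀ *ᵥ η) = ξ ⬝ᵥ η := by
  rw [dotProduct_mulVec, vecMul_transpose]
  exact congrArg (· ⬝ᵥ η) (hA ξ)

variable [DecidableEq ι]

theorem involutive_updateRow_one_mulVec {i : ι} {r : ι → R} (hr : r i = -1) :
    Function.Involutive (updateRow 1 i r *ᵥ ·) := by
  intro v
  ext j
  rcases eq_or_ne j i with rfl | hj
  · simp only [updateRow_mulVec, one_mulVec, Function.update_self, Pi.update_eq_sub_add_single,
      dotProduct_add, dotProduct_sub, dotProduct_single, hr]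
    ring
  · simp [updateRow_mulVec, hj]

theorem transpose_updateRow_one_mulVec_apply_self (i : ι) (r η : ι → R) :
    ((updateRow 1 i r)ᵀ *ᵥ η) i = r i * η i := by
  rw [mulVec_transpose, vecMul, dotProduct, Finset.sum_eq_single i]
  · simp [mul_comm]
  · intro j _ hj
    simp [updateRow_ne hj, one_apply_ne hj]
  · simp

theorem updateRow_one_add_single_dotProduct {i : ι} {r : ι → R} (hr : r i = -1) (a : R)
    (ξ η : ι → R) :
    (updateRow 1 i r *ᵥ ξ + single i i (-a) *ᵥ η) ⬝ᵥ ((updateRow 1 i r)ᵀ *ᵥ η) =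
      ξ ⬝ᵥ η + a * η i ^ 2 := by
  rw [add_dotProduct,
    dotProduct_transpose_mulVec_of_involutive (involutive_updateRow_one_mulVec hr),
    single_mulVec_eq, smul_dotProduct, single_dotProduct,
    transpose_updateRow_one_mulVec_apply_self, hr]
  ring

end Matrix

/-- The derivative of a ball-to-ball collision map changes the quadratic form `Q`
by `α η_i²`; in particular it is Q-monotone for `α ≥ 0` and strictly Q-increasing
on vectors with `η_i ≠ 0` when `α > 0`. -/
theorem ball_collision_Q_monotone (n : ℕ) (γ α : ℝ)
    (i : ℕ) (hi1 : 1 ≤ i) (hi2 : i ≤ n - 2)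
    (D F : Matrix (Fin n) (Fin n) ℝ)
    (hD : D = Matrix.of fun (j k : Fin n) =>
      if (j : ℕ) = i then
        (if (k : ℕ) = i - 1 then 1 - γ
         else if (k : ℕ) = i then -1
         else if (k : ℕ) = i + 1 then 1 + γ
         else 0)
      else if j = k then 1 else 0)
    (hF : F = Matrix.of fun (j k : Fin n) =>
      if (j : ℕ) = i ∧ (k : ℕ) = i then -α else 0)
    (ξ η : Fin n → ℝ) :
    (D.mulVec ξ + F.mulVec η) ⬝ᵥ (Dᵀ.mulVec η)
        = ξ ⬝ᵥ η + α * (η ⟨i, by omega⟩) ^ 2 ∧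
    (0 ≤ α → ξ ⬝ᵥ η ≤ (D.mulVec ξ + F.mulVec η) ⬝ᵥ (Dᵀ.mulVec η)) ∧
    (0 < α → η ⟨i, by omega⟩ ≠ 0 →
        ξ ⬝ᵥ η < (D.mulVec ξ + F.mulVec η) ⬝ᵥ (Dᵀ.mulVec η)) := by
  set i₀ : Fin n := ⟨i, by omega⟩
  have hD_eq : D = updateRow 1 i₀ (D i₀) := by
    ext j k
    rcases eq_or_ne j i₀ with rfl | hj
    · simp
    · have hj' : (j : ℕ) ≠ i := fun h => hj (Fin.ext h)
      simp [updateRow_ne hj, hD, one_apply, hj']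
  have hD_diag : D i₀ i₀ = -1 := by
    simp [hD, i₀, show i ≠ i - 1 by omega]
  have hF_eq : F = single i₀ i₀ (-α) := by
    ext j k
    simp [hF, single_apply, i₀, Fin.ext_iff, eq_comm]
  have hQ : (D *ᵥ ξ + F *ᵥ η) ⬝ᵥ (Dᵀ *ᵥ η) = ξ ⬝ᵥ η + α * η i₀ ^ 2 := by
    rw [hF_eq, hD_eq, updateRow_one_add_single_dotProduct hD_diag]
  refine ⟨hQ, fun hα => ?_, fun hα hη => ?_⟩ <;> rw [hQ]
  · have : 0 ≤ α * η i₀ ^ 2 := by positivity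
    linarith
  · have : 0 < α * η i₀ ^ 2 := by positivity
    linarith
end

section
/- Let n ≥ 3 and let M₁, …, M_k be 2n×2n real block matrices, each of which is either of floor type [[I, 0], [B, I]] with B having a single nonnegative entry β_j ≥ 0 in position (0,0), or of ball type [[D(γ_j, i_j), F_j], [0, D(γ_j, i_j)ᵀ]] where 1 ≤ i_j ≤ n − 2, D(γ, i) is the identity except row i has entries 1 − γ, −1, 1 + γ in columns i−1, i, i+1, and F_j has a single entry −α_j with α_j ≥ 0 in position (i_j, i_j). Then the product M_k ⋯ M₁ is Q-monotone: writing M_k ⋯ M₁ (ξ, η) = (ξ', η'), one has ⟨ξ', η'⟩ ≥ ⟨ξ, η⟩ for all (ξ, η) ∈ ℝⁿ × ℝⁿ. Consequently the closed cone {(ξ, η) : ⟨ξ, η⟩ ≥ 0} is invariant under any such product. -/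
/-! Q-monotone matrices form a monoid, so it suffices to treat one factor at a time.
A floor factor adds `⟨ξ, Bξ⟩ = β ξ₀² ≥ 0` to `Q`. In a ball factor `D = 1 + e_i rᵀ` with
`⟨r, e_i⟩ = -2`, a reflection, so `D² = 1` and the diagonal blocks `D`, `Dᵀ` preserve `⟨ξ, η⟩`
exactly; the block `F = -α e_i e_iᵀ` then contributes `⟨η, DFη⟩ = α η_i² ≥ 0`. -/

open Matrix

/-- A floor-type collision derivative: `[[I, 0], [B, I]]` with a single
nonnegative entry `β` of `B` in position `(0,0)`. -/
def IsFloorType (n : ℕ) (M : Matrix (Fin n ⊕ Fin n) (Fin n ⊕ Fin n) ℝ) : Prop :=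
  ∃ β : ℝ, 0 ≤ β ∧
    M = Matrix.fromBlocks 1 0
      (Matrix.of fun (j k : Fin n) =>
        if (j : ℕ) = 0 ∧ (k : ℕ) = 0 then β else 0) 1

/-- A ball-type collision derivative: `[[D(γ,i), F], [0, D(γ,i)ᵀ]]` with `F`
having a single entry `−α ≤ 0` in position `(i,i)`. -/
def IsBallType (n : ℕ) (M : Matrix (Fin n ⊕ Fin n) (Fin n ⊕ Fin n) ℝ) : Prop :=
  ∃ (γ α : ℝ) (i : ℕ), 1 ≤ i ∧ i ≤ n - 2 ∧ 0 ≤ α ∧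
    M = Matrix.fromBlocks
      (Matrix.of fun (j k : Fin n) =>
        if (j : ℕ) = i then
          (if (k : ℕ) = i - 1 then 1 - γ
           else if (k : ℕ) = i then -1
           else if (k : ℕ) = i + 1 then 1 + γ
           else 0)
        else if j = k then 1 else 0)
      (Matrix.of fun (j k : Fin n) =>
        if (j : ℕ) = i ∧ (k : ℕ) = i then -α else 0)
      0
      (Matrix.of fun (j k : Fin n) =>
        if (j : ℕ) = i then
          (if (k : ℕ) = i - 1 then 1 - γ
           else if (k : ℕ) = i then -1
           else if (k : ℕ) = i + 1 then 1 + γ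
           else 0)
        else if j = k then 1 else 0)ᵀ

section General

variable {ι R : Type*} [Fintype ι] [CommRing R]

def wojtkowskiQ (v : ι ⊕ ι → R) : R := (v ∘ Sum.inl) ⬝ᵥ (v ∘ Sum.inr)

theorem wojtkowskiQ_fromBlocks_mulVec (A B C D : Matrix ι ι R) (v : ι ⊕ ι → R) :
    wojtkowskiQ (fromBlocks A B C D *ᵥ v) =
      (A *ᵥ (v ∘ Sum.inl) + B *ᵥ (v ∘ Sum.inr)) ⬝ᵥ (C *ᵥ (v ∘ Sum.inl) + D *ᵥ (v ∘ Sum.inr)) := by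
  rw [wojtkowskiQ, fromBlocks_mulVec, Sum.elim_comp_inl, Sum.elim_comp_inr]

section QMonotone

variable [PartialOrder R] [IsOrderedRing R]

def IsQMonotone (M : Matrix (ι ⊕ ι) (ι ⊕ ι) R) : Prop :=
  ∀ v, wojtkowskiQ v ≤ wojtkowskiQ (M *ᵥ v)

def qMonotoneSubmonoid [DecidableEq ι] : Submonoid (Matrix (ι ⊕ ι) (ι ⊕ ι) R) where
  carrier := {M | IsQMonotone M}
  one_mem' v := by simp
  mul_mem' {M P} hM hP v := by
    rw [← mulVec_mulVec]
    exact (hP v).trans (hM _)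

theorem isQMonotone_fromBlocks_one_zero [DecidableEq ι] {B : Matrix ι ι R}
    (hB : ∀ x, 0 ≤ x ⬝ᵥ B *ᵥ x) : IsQMonotone (fromBlocks 1 0 B 1) := by
  intro v
  rw [wojtkowskiQ_fromBlocks_mulVec, one_mulVec, one_mulVec, zero_mulVec, add_zero,
    dotProduct_add]
  exact le_add_of_nonneg_left (hB _)

theorem isQMonotone_fromBlocks_zero_transpose [DecidableEq ι] {D F : Matrix ι ι R}
    (hD : D * D = 1) (hDF : ∀ x, 0 ≤ x ⬝ᵥ (D * F) *ᵥ x) : IsQMonotone (fromBlocks D F 0 Dᵀ) := by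
  intro v
  have hDt : ∀ x y : ι → R, x ⬝ᵥ Dᵀ *ᵥ y = (D *ᵥ x) ⬝ᵥ y := fun x y => by
    rw [dotProduct_mulVec, vecMul_transpose]
  rw [wojtkowskiQ_fromBlocks_mulVec, zero_mulVec, zero_add, add_dotProduct, hDt, hDt,
    mulVec_mulVec, mulVec_mulVec, hD, one_mulVec, dotProduct_comm ((D * F) *ᵥ _)]
  exact le_add_of_nonneg_right (hDF _)

end QMonotone

section RankOne

variable {u r : ι → R}

theorem one_add_vecMulVec_mulVec_self [DecidableEq ι] (h : r ⬝ᵥ u = -2) :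
    (1 + vecMulVec u r) *ᵥ u = -u := by
  rw [add_mulVec, one_mulVec, vecMulVec_mulVec, h, op_smul_eq_smul]
  module

theorem one_add_vecMulVec_mul_self [DecidableEq ι] (h : r ⬝ᵥ u = -2) :
    (1 + vecMulVec u r) * (1 + vecMulVec u r) = 1 := by
  rw [mul_add, mul_one, mul_vecMulVec, one_add_vecMulVec_mulVec_self h, neg_vecMulVec,
    add_neg_cancel_right]

theorem dotProduct_smul_vecMulVec_mulVec (c : R) (u x : ι → R) :
    x ⬝ᵥ (c • vecMulVec u u) *ᵥ x = c * (u ⬝ᵥ x) ^ 2 := by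
  rw [smul_mulVec, vecMulVec_mulVec, op_smul_eq_smul, dotProduct_smul,
    dotProduct_smul, dotProduct_comm, smul_eq_mul, smul_eq_mul]
  ring

theorem one_add_vecMulVec_mul_smul_vecMulVec_self [DecidableEq ι] (h : r ⬝ᵥ u = -2) (c : R) :
    (1 + vecMulVec u r) * (c • vecMulVec u u) = (-c) • vecMulVec u u := by
  rw [Matrix.mul_smul, mul_vecMulVec, one_add_vecMulVec_mulVec_self h, neg_vecMulVec, smul_neg,
    neg_smul]

end RankOne

end General

theorem isQMonotone_of_isFloorType {n : ℕ} {M : Matrix (Fin n ⊕ Fin n) (Fin n ⊕ Fin n) ℝ}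
    (h : IsFloorType n M) : IsQMonotone M := by
  obtain ⟨β, hβ, rfl⟩ := h
  -- not `Pi.single 0 1`, which would need `0 < n`
  set u : Fin n → ℝ := fun j => if (j : ℕ) = 0 then 1 else 0
  have hB : of (fun j k : Fin n => if (j : ℕ) = 0 ∧ (k : ℕ) = 0 then β else 0) =
      β • vecMulVec u u := by
    ext j k
    simp only [u, of_apply, Matrix.smul_apply, vecMulVec_apply, smul_eq_mul]
    split_ifs <;> simp_all
  rw [hB]
  exact isQMonotone_fromBlocks_one_zero fun x => by
    rw [dotProduct_smul_vecMulVec_mulVec]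
    positivity

theorem isQMonotone_of_isBallType {n : ℕ} {M : Matrix (Fin n ⊕ Fin n) (Fin n ⊕ Fin n) ℝ}
    (h : IsBallType n M) : IsQMonotone M := by
  obtain ⟨γ, α, i, hi, hin, hα, rfl⟩ := h
  set u : Fin n → ℝ := Pi.single ⟨i, by omega⟩ 1
  set r : Fin n → ℝ := fun k =>
    if (k : ℕ) = i - 1 then 1 - γ
    else if (k : ℕ) = i then -2
    else if (k : ℕ) = i + 1 then 1 + γ
    else 0
  have hru : r ⬝ᵥ u = -2 := by
    have : i ≠ i - 1 := by omega
    simp [u, r, dotProduct_single, this]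
  have hD : (of fun j k : Fin n =>
      if (j : ℕ) = i then
        (if (k : ℕ) = i - 1 then 1 - γ
         else if (k : ℕ) = i then -1
         else if (k : ℕ) = i + 1 then 1 + γ
         else 0)
      else if j = k then 1 else (0 : ℝ)) = 1 + vecMulVec u r := by
    ext j k
    simp only [u, r, Matrix.add_apply, one_apply, vecMulVec_apply, of_apply, Pi.single_apply,
      Fin.ext_iff]
    split_ifs <;> first | ring1 | omega
  have hF : (of fun j k : Fin n => if (j : ℕ) = i ∧ (k : ℕ) = i then -α else 0) =
      (-α) • vecMulVec u u := by
    ext j k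
    simp only [u, of_apply, Matrix.smul_apply, vecMulVec_apply, smul_eq_mul, Pi.single_apply,
      Fin.ext_iff]
    split_ifs <;> simp_all
  rw [hD, hF]
  refine isQMonotone_fromBlocks_zero_transpose (one_add_vecMulVec_mul_self hru) fun x => ?_
  rw [one_add_vecMulVec_mul_smul_vecMulVec_self hru, dotProduct_smul_vecMulVec_mulVec, neg_neg]
  positivity

theorem product_of_collision_derivatives_Q_monotone_general
    (n : ℕ)
    (Ms : List (Matrix (Fin n ⊕ Fin n) (Fin n ⊕ Fin n) ℝ))
    (hMs : ∀ M ∈ Ms, IsFloorType n M ∨ IsBallType n M)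
    (ξ η : Fin n → ℝ) :
    ξ ⬝ᵥ η ≤ (fun i => Ms.prod.mulVec (Sum.elim ξ η) (Sum.inl i)) ⬝ᵥ
              (fun i => Ms.prod.mulVec (Sum.elim ξ η) (Sum.inr i)) ∧
    (0 ≤ ξ ⬝ᵥ η →
      0 ≤ (fun i => Ms.prod.mulVec (Sum.elim ξ η) (Sum.inl i)) ⬝ᵥ
          (fun i => Ms.prod.mulVec (Sum.elim ξ η) (Sum.inr i))) := by
  have hprod : Ms.prod ∈ qMonotoneSubmonoid :=
    Submonoid.list_prod_mem _ fun M hM =>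
      (hMs M hM).elim isQMonotone_of_isFloorType isQMonotone_of_isBallType
  have hmono : ξ ⬝ᵥ η ≤ _ := hprod (Sum.elim ξ η)
  exact ⟨hmono, hmono.trans'⟩

/-- Any finite product of floor-type and ball-type collision derivatives is
Q-monotone, hence the closed cone `{(ξ, η) : ⟨ξ, η⟩ ≥ 0}` is invariant. -/
theorem product_of_collision_derivatives_Q_monotone
    (n : ℕ) (hn : 3 ≤ n)
    (Ms : List (Matrix (Fin n ⊕ Fin n) (Fin n ⊕ Fin n) ℝ))
    (hMs : ∀ M ∈ Ms, IsFloorType n M ∨ IsBallType n M)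
    (ξ η : Fin n → ℝ) :
    ξ ⬝ᵥ η ≤ (fun i => Ms.prod.mulVec (Sum.elim ξ η) (Sum.inl i)) ⬝ᵥ
              (fun i => Ms.prod.mulVec (Sum.elim ξ η) (Sum.inr i)) ∧
    (0 ≤ ξ ⬝ᵥ η →
      0 ≤ (fun i => Ms.prod.mulVec (Sum.elim ξ η) (Sum.inl i)) ⬝ᵥ
          (fun i => Ms.prod.mulVec (Sum.elim ξ η) (Sum.inr i))) :=
  product_of_collision_derivatives_Q_monotone_general n Ms hMs ξ η
end
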